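/- A three-level PT-net system (N,M0) with transition set T = L ∪ D ∪ H has the property INI if and only if (N\D, M) and (N\(H ∪ D), M) are language equivalent (with observable transitions L) for M = M0 and for every marking M such that M0[υd⟩M in N for some sequence υ ∈ T* and some downgrading transition d ∈ D. -/

import Mathlib

/-! ## Labelled transition systems -/

structure LTS (Q : Type _) (A : Type _) where
  init : Q
  tr : Q → A → Q → Prop

namespace LTS

variable {Q Q' A : Type _}

/-- One unobservable step. -/
def TauStep (S : LTS Q A) (Obs : Set A) (q q' : Q) : Prop :=
  ∃ τ, τ ∉ Obs ∧ S.tr q τ q'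

/-- `q →* q'` : reflexive-transitive closure of unobservable steps. -/
def TauStar (S : LTS Q A) (Obs : Set A) : Q → Q → Prop :=
  Relation.ReflTransGen (S.TauStep Obs)

/-- Weak steps producing a word of observable labels. -/
inductive WeakSteps (S : LTS Q A) (Obs : Set A) : Q → List A → Q → Prop
  | nil (q : Q) : WeakSteps S Obs q [] q
  | tau {q q' q'' : Q} {w : List A} {τ : A} :
      τ ∉ Obs → S.tr q τ q' → WeakSteps S Obs q' w q'' → WeakSteps S Obs q w q''
  | obs {q q' q'' : Q} {w : List A} {σ : A} :
      σ ∈ Obs → S.tr q σ q' → WeakSteps S Obs q' w q'' → WeakSteps S Obs q (σ :: w) q''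

/-- The language of a partially observed LTS. -/
def lang (S : LTS Q A) (Obs : Set A) : Set (List A) :=
  { w | ∃ q, S.WeakSteps Obs S.init w q }

end LTS

/-- `R` is a weak simulation of `S` by `S'`. -/
def IsWeakSimulation {Q Q' A : Type _} (Obs : Set A) (S : LTS Q A) (S' : LTS Q' A)
    (R : Q → Q' → Prop) : Prop :=
  R S.init S'.init ∧
  ∀ q1 q1', R q1 q1' →
    (∀ σ ∈ Obs, ∀ q2, S.tr q1 σ q2 →
      ∃ q1'' q2'' q2', S'.TauStar Obs q1' q1'' ∧ S'.tr q1'' σ q2'' ∧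
        S'.TauStar Obs q2'' q2' ∧ R q2 q2') ∧
    (∀ τ ∉ Obs, ∀ q2, S.tr q1 τ q2 →
      ∃ q2', S'.TauStar Obs q1' q2' ∧ R q2 q2')

/-- `S` is weakly simulated by `S'`. -/
def WeaklySimulated {Q Q' A : Type _} (Obs : Set A) (S : LTS Q A) (S' : LTS Q' A) : Prop :=
  ∃ R, IsWeakSimulation Obs S S' R

/-- `R` is a weak bisimulation between `S` and `S'`. -/
def IsWeakBisimulation {Q Q' A : Type _} (Obs : Set A) (S : LTS Q A) (S' : LTS Q' A)
    (R : Q → Q' → Prop) : Prop :=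
  IsWeakSimulation Obs S S' R ∧ IsWeakSimulation Obs S' S (fun q' q => R q q')

/-- `S` and `S'` are weakly bisimilar. -/
def WeaklyBisimilar {Q Q' A : Type _} (Obs : Set A) (S : LTS Q A) (S' : LTS Q' A) : Prop :=
  ∃ R, IsWeakBisimulation Obs S S' R

/-! ## Place/Transition Petri nets -/

/-- A PT-net over a universe `P` of places and `Tr` of transitions:
a finite set of places, a finite set of transitions, and input/output flows.
Flows of non-transitions vanish. -/
structure PTNet (P : Type _) (Tr : Type _) where
  places : Finset P
  transitions : Finset Tr
  pre : Tr → P → ℕ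
  post : Tr → P → ℕ
  pre_eq_zero : ∀ t ∉ transitions, ∀ p, pre t p = 0
  post_eq_zero : ∀ t ∉ transitions, ∀ p, post t p = 0

namespace PTNet

variable {P Tr : Type _} [DecidableEq P] [DecidableEq Tr]

/-- `M[t⟩` : transition `t` is enabled at marking `M`. -/
def Enabled (N : PTNet P Tr) (M : P → ℕ) (t : Tr) : Prop :=
  t ∈ N.transitions ∧ ∀ p ∈ N.places, N.pre t p ≤ M p

/-- The marking obtained by firing `t` at `M`. -/
def fire (N : PTNet P Tr) (M : P → ℕ) (t : Tr) : P → ℕ :=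
  fun p => if p ∈ N.places then M p + N.post t p - N.pre t p else M p

/-- `M[t⟩M'`. -/
def Fires (N : PTNet P Tr) (M : P → ℕ) (t : Tr) (M' : P → ℕ) : Prop :=
  N.Enabled M t ∧ M' = N.fire M t

/-- `M[s⟩M'` for a sequence `s` of transitions. -/
def FiresSeq (N : PTNet P Tr) : (P → ℕ) → List Tr → (P → ℕ) → Prop
  | M, [], M' => M' = M
  | M, t :: s, M' => ∃ M'', N.Fires M t M'' ∧ N.FiresSeq M'' s M'

/-- `M'` is reachable from `M`. -/
def Reachable (N : PTNet P Tr) (M M' : P → ℕ) : Prop :=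
  ∃ s, N.FiresSeq M s M'

/-- The restriction `N \ T'` of a net: the transitions in `T'` are removed. -/
def restrict (N : PTNet P Tr) (T' : Finset Tr) : PTNet P Tr where
  places := N.places
  transitions := N.transitions \ T'
  pre := fun t p => if t ∈ N.transitions \ T' then N.pre t p else 0
  post := fun t p => if t ∈ N.transitions \ T' then N.post t p else 0
  pre_eq_zero := by intro t ht p; simp [ht]
  post_eq_zero := by intro t ht p; simp [ht]

/-- The composition `N1 | N2` of two nets (intended for disjoint place sets);
shared transitions synchronize. -/
def comp (N1 N2 : PTNet P Tr) : PTNet P Tr where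
  places := N1.places ∪ N2.places
  transitions := N1.transitions ∪ N2.transitions
  pre := fun t p => if p ∈ N1.places then N1.pre t p else N2.pre t p
  post := fun t p => if p ∈ N1.places then N1.post t p else N2.post t p
  pre_eq_zero := by
    intro t ht p
    simp only [Finset.mem_union, not_or] at ht
    by_cases hp : p ∈ N1.places <;>
      simp [hp, N1.pre_eq_zero t ht.1, N2.pre_eq_zero t ht.2]
  post_eq_zero := by
    intro t ht p
    simp only [Finset.mem_union, not_or] at ht
    by_cases hp : p ∈ N1.places <;>
      simp [hp, N1.post_eq_zero t ht.1, N2.post_eq_zero t ht.2]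

/-- The union of two initial markings (agrees with `M1` on the places of `N1`,
with `M2` elsewhere). -/
def combine (N1 : PTNet P Tr) (M1 M2 : P → ℕ) : P → ℕ :=
  fun p => if p ∈ N1.places then M1 p else M2 p

/-- The reachability graph of a marked net, as an LTS on markings. -/
def toLTS (N : PTNet P Tr) (M0 : P → ℕ) : LTS (P → ℕ) Tr where
  init := M0
  tr := fun M t M' => N.Fires M t M'

/-- The language of the net system `(N, M0)` whose observable transitions are
those in `L` (labelled by themselves): projections of firing sequences onto `L*`. -/
def lang (N : PTNet P Tr) (M0 : P → ℕ) (L : Finset Tr) : Set (List Tr) :=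
  { w | ∃ s M, N.FiresSeq M0 s M ∧ s.filter (· ∈ L) = w }

/-- The free language of the net system `(N, M0)`: all of its firing sequences. -/
def freeLang (N : PTNet P Tr) (M0 : P → ℕ) : Set (List Tr) :=
  { s | ∃ M, N.FiresSeq M0 s M }

/-- The net with given places and transitions and empty flow. -/
def ofSets (Pl : Finset P) (Ts : Finset Tr) : PTNet P Tr where
  places := Pl
  transitions := Ts
  pre := fun _ _ => 0
  post := fun _ _ => 0
  pre_eq_zero := fun _ _ _ => rfl
  post_eq_zero := fun _ _ _ => rfl

end PTNet

/-! ## Non-interference properties -/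

section Security

variable {P Tr : Type _} [DecidableEq P] [DecidableEq Tr]

/-- Non-Deducibility on Compositions: for every high-level net system `N'`
(with any initial marking `M0'`) whose places are disjoint from those of `N` and
whose transitions avoid `L`, the systems `N \ H` and `(N | N') \ (H \ H')` are
language equivalent, the observable transitions being those in `L`. -/
def NDC (N : PTNet P Tr) (M0 : P → ℕ) (L H : Finset Tr) : Prop :=
  ∀ (N' : PTNet P Tr) (M0' : P → ℕ),
    Disjoint N.places N'.places → Disjoint N'.transitions L →
    (N.restrict H).lang M0 L =
      ((N.comp N').restrict (H \ N'.transitions)).lang (N.combine M0 M0') L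

/-- Bisimulation-based Non-Deducibility on Compositions: as `NDC`, but with
weak bisimilarity in place of language equivalence. -/
def BNDC (N : PTNet P Tr) (M0 : P → ℕ) (L H : Finset Tr) : Prop :=
  ∀ (N' : PTNet P Tr) (M0' : P → ℕ),
    Disjoint N.places N'.places → Disjoint N'.transitions L →
    WeaklyBisimilar (L : Set Tr) ((N.restrict H).toLTS M0)
      (((N.comp N').restrict (H \ N'.transitions)).toLTS (N.combine M0 M0'))

/-- Strong BNDC: whenever a reachable marking `M1` enables a high transition `h`
with `M1[h⟩M2`, the systems `(N \ H, M1)` and `(N \ H, M2)` are weakly bisimilar. -/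
def SBNDC (N : PTNet P Tr) (M0 : P → ℕ) (L H : Finset Tr) : Prop :=
  ∀ M1 h M2, N.Reachable M0 M1 → h ∈ H → N.Fires M1 h M2 →
    WeaklyBisimilar (L : Set Tr) ((N.restrict H).toLTS M1) ((N.restrict H).toLTS M2)

/-- The least relation generated from `M0 R M0` by:
(i) if `M1 R M2` and `M2[h⟩M2'` with `h ∈ H` then `M1 R M2'`;
(ii) if `M1 R M2`, `M1[l⟩M1'` (in `N \ H`) and `M2[l⟩M2'` with `l ∈ L`
then `M1' R M2'`. -/
inductive RRel (N : PTNet P Tr) (M0 : P → ℕ) (L H : Finset Tr) : (P → ℕ) → (P → ℕ) → Prop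
  | base : RRel N M0 L H M0 M0
  | high {M1 M2 M2' : P → ℕ} {h : Tr} : h ∈ H → RRel N M0 L H M1 M2 →
      N.Fires M2 h M2' → RRel N M0 L H M1 M2'
  | low {M1 M2 M1' M2' : P → ℕ} {l : Tr} : l ∈ L → RRel N M0 L H M1 M2 →
      (N.restrict H).Fires M1 l M1' → N.Fires M2 l M2' → RRel N M0 L H M1' M2'

/-- The property `P(h,l)`: for all `w ∈ (L ∪ H)*` and `s ∈ L*`, if `M0[w⟩M1`,
`M1[h⟩M2`, `M1[s⟩M3` and `M2[s⟩M4`, then `M3[l⟩` iff `M4[l⟩`. -/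
def PropP (N : PTNet P Tr) (M0 : P → ℕ) (L H : Finset Tr) (h l : Tr) : Prop :=
  ∀ (w s : List Tr) (M1 M2 M3 M4 : P → ℕ),
    (∀ t ∈ w, t ∈ L ∪ H) → (∀ t ∈ s, t ∈ L) →
    N.FiresSeq M0 w M1 → N.Fires M1 h M2 →
    N.FiresSeq M1 s M3 → N.FiresSeq M2 s M4 →
    (N.Enabled M3 l ↔ N.Enabled M4 l)

/-- Intransitive Non-Interference for a three-level net system:
`(N \ D, M)` has NDC (w.r.t. low `L`, high `H`) for `M = M0` and for every
marking `M` with `M0[υd⟩M` in `N`, `d ∈ D`. -/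
def INI (N : PTNet P Tr) (M0 : P → ℕ) (L D H : Finset Tr) : Prop :=
  NDC (N.restrict D) M0 L H ∧
  ∀ (υ : List Tr) (d : Tr) (M : P → ℕ), d ∈ D → N.FiresSeq M0 (υ ++ [d]) M →
    NDC (N.restrict D) M L H

/-- Bisimulation-based Intransitive Non-Interference: as `INI` with `BNDC`. -/
def BINI (N : PTNet P Tr) (M0 : P → ℕ) (L D H : Finset Tr) : Prop :=
  BNDC (N.restrict D) M0 L H ∧
  ∀ (υ : List Tr) (d : Tr) (M : P → ℕ), d ∈ D → N.FiresSeq M0 (υ ++ [d]) M →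
    BNDC (N.restrict D) M L H

/-- The property `Q(h,l)`: for all `χ ∈ T*` and `s ∈ L*`, if `M0[χ⟩M1`,
`M1[h⟩M2`, `M1[s⟩M3` and `M2[s⟩M4`, then `M3[l⟩` iff `M4[l⟩`. -/
def PropQ (N : PTNet P Tr) (M0 : P → ℕ) (L : Finset Tr) (h l : Tr) : Prop :=
  ∀ (χ s : List Tr) (M1 M2 M3 M4 : P → ℕ),
    (∀ t ∈ χ, t ∈ N.transitions) → (∀ t ∈ s, t ∈ L) →
    N.FiresSeq M0 χ M1 → N.Fires M1 h M2 →
    N.FiresSeq M1 s M3 → N.FiresSeq M2 s M4 →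
    (N.Enabled M3 l ↔ N.Enabled M4 l)

end Security

/-! Write `B = N \ D`, whose transitions are all low or high. For such a net, NDC at `M` is
equivalent to `lang (B, M) = lang (B \ H, M)`. The high environment without places whose
transitions are all of `H` lets `B` fire its high transitions unhindered, so NDC forces this
equality. Conversely, the low runs of `B \ H` lift to every composition `B | N'`, and every run of
`B | N'` projects onto a run of `B` with the same low word, since the environment's own
transitions are not low and do not touch the places of `B`. Finally `(N \ D) \ H = N \ (H ∪ D)`. -/

namespace PTNet

variable {P Tr : Type _}

theorem restrict_restrict [DecidableEq Tr] (N : PTNet P Tr) (A B : Finset Tr) :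
    (N.restrict A).restrict B = N.restrict (B ∪ A) := by
  obtain ⟨places, transitions, pre, post, hpre, hpost⟩ := N
  have ht : (transitions \ A) \ B = transitions \ (B ∪ A) := by
    ext; simp only [Finset.mem_sdiff, Finset.mem_union]; tauto
  simp only [restrict, mk.injEq, true_and, ht]
  constructor <;> funext t p <;> by_cases h : t ∈ transitions \ (B ∪ A) <;> simp_all

variable [DecidableEq P]

theorem firesSeq_cons {N : PTNet P Tr} {M M' : P → ℕ} {t : Tr} {s : List Tr} :
    N.FiresSeq M (t :: s) M' ↔ ∃ M'', N.Fires M t M'' ∧ N.FiresSeq M'' s M' :=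
  Iff.rfl

theorem FiresSeq.mem_transitions {N : PTNet P Tr} {M M' : P → ℕ} {s : List Tr}
    (h : N.FiresSeq M s M') : ∀ t ∈ s, t ∈ N.transitions := by
  induction s generalizing M with
  | nil => simp
  | cons t s ih =>
    obtain ⟨M'', ⟨⟨ht, -⟩, -⟩, hs⟩ := firesSeq_cons.mp h
    simpa [ht] using ih hs

variable [DecidableEq Tr]

theorem fires_restrict_iff {N : PTNet P Tr} {T' : Finset Tr} {M M' : P → ℕ} {t : Tr} :
    (N.restrict T').Fires M t M' ↔ t ∉ T' ∧ N.Fires M t M' := by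
  by_cases ht : t ∈ N.transitions \ T'
  · have hfire : (N.restrict T').fire M t = N.fire M t := by
      funext p; simp only [fire, restrict, if_pos ht]
    simp only [Fires, Enabled, hfire]
    simp_all [restrict]
  · simp only [Finset.mem_sdiff, not_and, not_not] at ht
    simp only [Fires, Enabled, restrict, Finset.mem_sdiff]
    tauto

theorem firesSeq_restrict_iff {N : PTNet P Tr} {T' : Finset Tr} {M M' : P → ℕ}
    {s : List Tr} :
    (N.restrict T').FiresSeq M s M' ↔ (∀ t ∈ s, t ∉ T') ∧ N.FiresSeq M s M' := by
  induction s generalizing M with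
  | nil => simp [FiresSeq]
  | cons t s ih =>
    simp only [firesSeq_cons, fires_restrict_iff, ih, List.forall_mem_cons]
    constructor
    · rintro ⟨M'', ⟨ht, hf⟩, hs, hfs⟩
      exact ⟨⟨ht, hs⟩, M'', hf, hfs⟩
    · rintro ⟨⟨ht, hs⟩, M'', hf, hfs⟩
      exact ⟨M'', ⟨ht, hf⟩, hs, hfs⟩

theorem exists_comp_fires {B N' : PTNet P Tr} {Mb Mb' Mc : P → ℕ} {t : Tr}
    (h : B.Fires Mb t Mb') (ht : N'.pre t = 0) (hM : Set.EqOn Mc Mb B.places) :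
    ∃ Mc', (B.comp N').Fires Mc t Mc' ∧ Set.EqOn Mc' Mb' B.places := by
  obtain ⟨⟨htB, hen⟩, rfl⟩ := h
  refine ⟨_, ⟨⟨Finset.mem_union_left _ htB, fun p _ => ?_⟩, rfl⟩, fun p hp => ?_⟩
  · by_cases hp : p ∈ B.places
    · simpa [comp, hp, hM hp] using hen p hp
    · simp [comp, hp, ht]
  · have hp : p ∈ B.places := hp
    simp [comp, fire, hp, hM hp]

theorem exists_fires_of_comp_fires {B N' : PTNet P Tr} {Mc Mc' Mb : P → ℕ} {t : Tr}
    (h : (B.comp N').Fires Mc t Mc') (htB : t ∈ B.transitions)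
    (hM : Set.EqOn Mb Mc B.places) :
    ∃ Mb', B.Fires Mb t Mb' ∧ Set.EqOn Mb' Mc' B.places := by
  obtain ⟨⟨-, hen⟩, rfl⟩ := h
  refine ⟨_, ⟨⟨htB, fun p hp => ?_⟩, rfl⟩, fun p hp => ?_⟩
  · simpa [comp, hp, hM hp] using hen p (Finset.mem_union_left _ hp)
  · have hp : p ∈ B.places := hp
    simp [comp, fire, hp, hM hp]

theorem eqOn_of_comp_fires_of_notMem {B N' : PTNet P Tr} {Mc Mc' : P → ℕ} {t : Tr}
    (h : (B.comp N').Fires Mc t Mc') (htB : t ∉ B.transitions) :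
    Set.EqOn Mc' Mc B.places := by
  obtain ⟨-, rfl⟩ := h
  intro p hp
  have hp : p ∈ B.places := hp
  simp [comp, fire, hp, B.pre_eq_zero t htB, B.post_eq_zero t htB]

theorem exists_comp_firesSeq {B N' : PTNet P Tr} {Mb Mb' Mc : P → ℕ} {s : List Tr}
    (h : B.FiresSeq Mb s Mb') (hs : ∀ t ∈ s, N'.pre t = 0) (hM : Set.EqOn Mc Mb B.places) :
    ∃ Mc', (B.comp N').FiresSeq Mc s Mc' ∧ Set.EqOn Mc' Mb' B.places := by
  induction s generalizing Mb Mc with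
  | nil => exact ⟨Mc, rfl, (h : Mb' = Mb) ▸ hM⟩
  | cons t s ih =>
    obtain ⟨Mb₁, hf, hfs⟩ := firesSeq_cons.mp h
    rw [List.forall_mem_cons] at hs
    obtain ⟨Mc₁, hf', hM₁⟩ := exists_comp_fires hf hs.1 hM
    obtain ⟨Mc', hfs', hM'⟩ := ih hfs hs.2 hM₁
    exact ⟨Mc', firesSeq_cons.mpr ⟨Mc₁, hf', hfs'⟩, hM'⟩

theorem exists_firesSeq_filter_of_comp_firesSeq {B N' : PTNet P Tr} {Mc Mc' Mb : P → ℕ}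
    {s : List Tr} (h : (B.comp N').FiresSeq Mc s Mc') (hM : Set.EqOn Mb Mc B.places) :
    ∃ Mb', B.FiresSeq Mb (s.filter (· ∈ B.transitions)) Mb' := by
  induction s generalizing Mb Mc with
  | nil => exact ⟨Mb, rfl⟩
  | cons t s ih =>
    obtain ⟨Mc₁, hf, hfs⟩ := firesSeq_cons.mp h
    by_cases htB : t ∈ B.transitions
    · obtain ⟨Mb₁, hf', hM₁⟩ := exists_fires_of_comp_fires hf htB hM
      obtain ⟨Mb', hfs'⟩ := ih hfs hM₁
      exact ⟨Mb', by simpa [List.filter_cons, htB] using firesSeq_cons.mpr ⟨Mb₁, hf', hfs'⟩⟩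
    · simpa [List.filter_cons, htB] using
        ih hfs (hM.trans (eqOn_of_comp_fires_of_notMem hf htB).symm)

theorem lang_restrict_comp_subset {B N' : PTNet P Tr} {X L : Finset Tr} {Mc Mb : P → ℕ}
    (hN' : Disjoint N'.transitions L) (hM : Set.EqOn Mb Mc B.places) :
    ((B.comp N').restrict X).lang Mc L ⊆ B.lang Mb L := by
  rintro _ ⟨s, Mc', hs, rfl⟩
  have hs := (firesSeq_restrict_iff.mp hs).2
  obtain ⟨Mb', hb⟩ := exists_firesSeq_filter_of_comp_firesSeq hs hM
  refine ⟨_, Mb', hb, ?_⟩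
  rw [List.filter_filter]
  refine List.filter_congr fun t ht => ?_
  have htBN' : t ∈ B.transitions ∪ N'.transitions := hs.mem_transitions t ht
  by_cases htL : t ∈ L
  · have htN' : t ∉ N'.transitions := Finset.disjoint_right.mp hN' htL
    simp_all
  · simp [htL]

theorem lang_restrict_subset_lang_restrict_comp {B N' : PTNet P Tr} {L H : Finset Tr}
    {Mb Mc : P → ℕ} (hB : B.transitions ⊆ L ∪ H) (hN' : Disjoint N'.transitions L)
    (hM : Set.EqOn Mc Mb B.places) :
    (B.restrict H).lang Mb L ⊆ ((B.comp N').restrict (H \ N'.transitions)).lang Mc L := by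
  rintro _ ⟨s, Mb', hs, rfl⟩
  obtain ⟨hsH, hs⟩ := firesSeq_restrict_iff.mp hs
  have hsL : ∀ t ∈ s, t ∈ L := fun t ht =>
    (Finset.mem_union.mp (hB (hs.mem_transitions t ht))).resolve_right (hsH t ht)
  obtain ⟨Mc', hc, -⟩ := exists_comp_firesSeq hs
    (fun t ht => funext (N'.pre_eq_zero t (Finset.disjoint_right.mp hN' (hsL t ht)))) hM
  exact ⟨s, Mc', firesSeq_restrict_iff.mpr ⟨fun t ht h => hsH t ht (Finset.mem_sdiff.mp h).1, hc⟩,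
    rfl⟩

theorem lang_restrict_empty_comp_ofSets {B : PTNet P Tr} {T L : Finset Tr} {M : P → ℕ}
    (hT : Disjoint T L) : ((B.comp (ofSets ∅ T)).restrict ∅).lang M L = B.lang M L := by
  refine subset_antisymm (lang_restrict_comp_subset hT (Set.eqOn_refl _ _)) ?_
  rintro _ ⟨s, M', hs, rfl⟩
  obtain ⟨Mc, hc, -⟩ := exists_comp_firesSeq (N' := ofSets ∅ T) hs (fun _ _ => rfl)
    (Set.eqOn_refl _ _)
  exact ⟨s, Mc, firesSeq_restrict_iff.mpr ⟨by simp, hc⟩, rfl⟩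

theorem ndc_iff_lang_eq {B : PTNet P Tr} {M : P → ℕ} {L H : Finset Tr}
    (hB : B.transitions ⊆ L ∪ H) (hLH : Disjoint L H) :
    NDC B M L H ↔ B.lang M L = (B.restrict H).lang M L := by
  have hM : ∀ M', Set.EqOn (B.combine M M') M B.places := fun M' p hp => if_pos hp
  constructor
  · intro hndc
    have h := hndc (ofSets ∅ H) M (Finset.disjoint_empty_right _) hLH.symm
    have hH : H \ (ofSets ∅ H : PTNet P Tr).transitions = ∅ := Finset.sdiff_self H
    have hc : B.combine M M = M := funext fun p => ite_self _
    rw [h, hH, hc, lang_restrict_empty_comp_ofSets hLH.symm]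
  · intro h N' M' _ hN'
    exact subset_antisymm (lang_restrict_subset_lang_restrict_comp hB hN' (hM M'))
      (h ▸ lang_restrict_comp_subset hN' (hM M').symm)

end PTNet

theorem ini_iff_lang_eq_general
    {P Tr : Type _} [DecidableEq P] [DecidableEq Tr]
    (N : PTNet P Tr) (M0 : P → ℕ) (L D H : Finset Tr)
    (hT : N.transitions = L ∪ D ∪ H)
    (hLH : Disjoint L H) :
    INI N M0 L D H ↔
      ((N.restrict D).lang M0 L = (N.restrict (H ∪ D)).lang M0 L ∧
       ∀ (υ : List Tr) (d : Tr) (M : P → ℕ), d ∈ D →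
         N.FiresSeq M0 (υ ++ [d]) M →
         (N.restrict D).lang M L = (N.restrict (H ∪ D)).lang M L) := by
  have hB : (N.restrict D).transitions ⊆ L ∪ H := by
    intro t ht
    simp only [PTNet.restrict, hT, Finset.mem_sdiff, Finset.mem_union] at ht ⊢
    tauto
  simp only [INI, PTNet.ndc_iff_lang_eq hB hLH, PTNet.restrict_restrict]

/-- a three-level net system has INI iff `(N\D, M)` and
`(N\(H∪D), M)` are language equivalent (observable transitions `L`) for
`M = M0` and for every `M` with `M0[υd⟩M` in `N`, `d ∈ D`. -/
theorem ini_iff_lang_eq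
    {P Tr : Type _} [DecidableEq P] [DecidableEq Tr]
    (N : PTNet P Tr) (M0 : P → ℕ) (L D H : Finset Tr)
    (hT : N.transitions = L ∪ D ∪ H)
    (hLD : Disjoint L D) (hLH : Disjoint L H) (hDH : Disjoint D H) :
    INI N M0 L D H ↔
      ((N.restrict D).lang M0 L = (N.restrict (H ∪ D)).lang M0 L ∧
       ∀ (υ : List Tr) (d : Tr) (M : P → ℕ), d ∈ D →
         N.FiresSeq M0 (υ ++ [d]) M →
         (N.restrict D).lang M L = (N.restrict (H ∪ D)).lang M L) :=
  ini_iff_lang_eq_general N M0 L D H hT hLH
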